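/- Let A be a finite-dimensional k-algebra, e an idempotent, and M an indecomposable finitely generated right A-module annihilated by AeA. If the injective dimension of M as an A-module is at most 1, then the injective dimension of M as an A/AeA-module is at most 1. -/

import Mathlib

/-!
For a surjective ring map `f : R → S`, the elements of an `R`-module `X` killed by `ker f` form
an `S`-module (it is `Hom_R(S, X)`), and by Baer's criterion it is `S`-injective when `X` is
`R`-injective. Applying this to an injective coresolution `0 → M → I → Q → 0` over `A` gives
`0 → M → ann I → ann Q` with `ann I`, `ann Q` injective over `B = A/AeA`; the last map is onto
because `AeA` is an idempotent ideal: if `x·AeA ⊆ M` then `x·AeA = x·AeA·AeA ⊆ M·AeA = 0`.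
-/

open MulOpposite

/-- `idLE R d M` : the `R`-module `M` has injective dimension at most `d`. -/
def idLE (R : Type) [Ring R] : ℕ → (M : Type) → [_inst : AddCommGroup M] → [_inst2 : Module R M] → Prop
  | 0, M, _, _ => Module.Injective R M
  | d + 1, M, _, _ =>
    ∃ (I : ModuleCat R) (f : M →ₗ[R] I), Module.Injective R I ∧
      Function.Injective f ∧ idLE R d (I ⧸ LinearMap.range f)

open Function

universe u v

section Descent

variable {R S : Type*} [Ring R] [Ring S] {f : R →+* S}

namespace Module.IsTorsionBySet

variable {X : Type*} [AddCommGroup X] [Module R X]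

theorem surjInv_apply_smul (hf : Surjective f) (hX : IsTorsionBySet R X (RingHom.ker f))
    (r : R) (x : X) : surjInv hf (f r) • x = r • x := by
  have hr : surjInv hf (f r) - r ∈ RingHom.ker f := by
    rw [RingHom.mem_ker, map_sub, surjInv_eq hf, sub_self]
  rw [← sub_eq_zero, ← sub_smul]
  exact @hX x ⟨_, hr⟩

noncomputable abbrev moduleOfSurjective (hf : Surjective f)
    (hX : IsTorsionBySet R X (RingHom.ker f)) : Module S X :=
  letI : SMul S X := ⟨fun s x => surjInv hf s • x⟩
  hf.moduleLeft f (surjInv_apply_smul hf hX)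

theorem smul_moduleOfSurjective (hf : Surjective f) (hX : IsTorsionBySet R X (RingHom.ker f))
    (r : R) (x : X) : letI := hX.moduleOfSurjective hf; f r • x = r • x :=
  surjInv_apply_smul hf hX r x

end Module.IsTorsionBySet

def LinearMap.extendScalarsOfSurjectiveHom {X Y : Type*} [AddCommGroup X] [Module R X] [Module S X]
    [AddCommGroup Y] [Module R Y] [Module S Y] (hf : Surjective f)
    (hX : ∀ (r : R) (x : X), f r • x = r • x) (hY : ∀ (r : R) (y : Y), f r • y = r • y)
    (g : X →ₗ[R] Y) : X →ₗ[S] Y where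
  toFun := g
  map_add' := g.map_add
  map_smul' := hf.forall.mpr fun r x => by simp [hX, hY]

namespace Submodule

variable (f) (X : Type*) [AddCommGroup X] [Module R X]

def torsionByKer : Submodule R X where
  carrier := {x | ∀ r ∈ RingHom.ker f, r • x = 0}
  add_mem' hx hy r hr := by rw [smul_add, hx r hr, hy r hr, add_zero]
  zero_mem' _ _ := smul_zero _
  smul_mem' c x hx r hr := by
    rw [smul_smul]
    exact hx _ (by rw [RingHom.mem_ker, map_mul, RingHom.mem_ker.mp hr, zero_mul])

variable {f X}

theorem isTorsionBySet_torsionByKer :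
    Module.IsTorsionBySet R (torsionByKer f X) (RingHom.ker f) :=
  fun x r => Subtype.ext (x.2 r r.2)

theorem map_mem_torsionByKer {Y : Type*} [AddCommGroup Y] [Module R Y] (g : X →ₗ[R] Y) {x : X}
    (hx : x ∈ torsionByKer f X) : g x ∈ torsionByKer f Y := fun r hr => by
  rw [← g.map_smul, hx r hr, g.map_zero]

noncomputable instance [Fact (Surjective f)] : Module S (torsionByKer f X) :=
  isTorsionBySet_torsionByKer.moduleOfSurjective Fact.out

theorem torsionByKer.smul_eq [Fact (Surjective f)] (r : R) (x : torsionByKer f X) :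
    f r • x = r • x :=
  isTorsionBySet_torsionByKer.smul_moduleOfSurjective _ r x

theorem mem_torsionByKer_of_smul_mem (hK : RingHom.ker f ≤ RingHom.ker f * RingHom.ker f)
    {N : Submodule R X} (hN : N ≤ torsionByKer f X) {x : X}
    (hx : ∀ r ∈ RingHom.ker f, r • x ∈ N) : x ∈ torsionByKer f X := fun r hr => by
  refine smul_induction_on (p := fun r => r • x = 0) (hK hr) (fun a ha b hb => ?_)
    fun a b ha hb => by rw [add_smul, ha, hb, add_zero]
  rw [smul_eq_mul, mul_smul]
  exact hN (hx b hb) a ha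

theorem torsionByKer_quotient_surjective (hK : RingHom.ker f ≤ RingHom.ker f * RingHom.ker f)
    {N : Submodule R X} (hN : N ≤ torsionByKer f X) :
    Surjective (N.mkQ.restrict (p := torsionByKer f X) (q := torsionByKer f (X ⧸ N))
      fun _ => map_mem_torsionByKer N.mkQ) := by
  rintro ⟨q, hq⟩
  obtain ⟨x, rfl⟩ := N.mkQ_surjective q
  refine ⟨⟨x, mem_torsionByKer_of_smul_mem hK hN fun r hr => ?_⟩, rfl⟩
  rw [← Quotient.mk_eq_zero, Quotient.mk_smul]
  exact hq r hr

noncomputable def torsionByKerQuotientEquiv [Fact (Surjective f)]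
    (hK : RingHom.ker f ≤ RingHom.ker f * RingHom.ker f) {N : Submodule R X}
    (hN : N ≤ torsionByKer f X) (P : Submodule S (torsionByKer f X))
    (hP : ∀ x, x ∈ P ↔ (x : X) ∈ N) :
    (torsionByKer f X ⧸ P) ≃ₗ[S] torsionByKer f (X ⧸ N) :=
  let θ := LinearMap.extendScalarsOfSurjectiveHom Fact.out torsionByKer.smul_eq
    torsionByKer.smul_eq
    (N.mkQ.restrict fun _ => map_mem_torsionByKer N.mkQ)
  have hθ : LinearMap.ker θ = P := by
    ext x
    rw [hP, LinearMap.mem_ker, ← Subtype.coe_inj]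
    exact Quotient.mk_eq_zero N
  (quotEquivOfEq _ _ hθ.symm).trans
    (θ.quotKerEquivOfSurjective (torsionByKer_quotient_surjective hK hN))

end Submodule

open Submodule in
theorem Module.Baer.torsionByKer [Fact (Surjective f)] {X : Type*} [AddCommGroup X]
    [Module R X] (hX : Module.Baer R X) : Module.Baer S (torsionByKer f X) := by
  intro J g
  let g' : J.comap f →ₗ[R] X :=
    { toFun := fun r => g ⟨f r, r.2⟩
      map_add' := fun a b => by
        rw [← coe_add, ← g.map_add]
        congr 2
        exact Subtype.ext (map_add f (a : R) b)
      map_smul' := fun c r => by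
        rw [RingHom.id_apply, ← coe_smul, ← torsionByKer.smul_eq, ← g.map_smul]
        congr 2
        exact Subtype.ext (map_mul f c (r : R)) }
  obtain ⟨h, hh⟩ := hX _ g'
  -- `h 1` is killed by `ker f` because `ker f ⊆ f⁻¹ J` and `g'` vanishes there.
  have hx : h 1 ∈ Submodule.torsionByKer f X := fun r hr => by
    rw [RingHom.mem_ker] at hr
    rw [← h.map_smul, smul_eq_mul, mul_one, hh r (by simp [hr])]
    change (g ⟨f r, _⟩ : X) = 0
    simp_rw [hr]
    exact congrArg Subtype.val g.map_zero
  refine ⟨LinearMap.toSpanSingleton S _ ⟨h 1, hx⟩, fun s hs => ?_⟩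
  obtain ⟨r, rfl⟩ := (Fact.out : Surjective f) s
  apply Subtype.ext
  rw [LinearMap.toSpanSingleton_apply, torsionByKer.smul_eq, coe_smul, ← h.map_smul, smul_eq_mul,
    mul_one, hh r hs]
  rfl

instance Module.Injective.torsionByKer {R : Type u} {X : Type v} [Ring R] [Small.{v} R]
    {f : R →+* S} [Fact (Surjective f)] [AddCommGroup X] [Module R X] [Module.Injective R X] :
    Module.Injective S (Submodule.torsionByKer f X) :=
  (Module.Baer.torsionByKer (Module.Baer.of_injective ‹_›)).injective

end Descent

theorem idLE_one_of_surjective {R S : Type} [Ring R] [Ring S] {f : R →+* S}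
    [Fact (Surjective f)] (hK : RingHom.ker f ≤ RingHom.ker f * RingHom.ker f)
    (X : Type) [AddCommGroup X] [Module R X] [Module S X]
    (hX : ∀ (r : R) (x : X), f r • x = r • x)
    (h : idLE R 1 X) : idLE S 1 X := by
  obtain ⟨I, ι, hI, hι, hQ⟩ := h
  have hιT : ∀ x, ι x ∈ Submodule.torsionByKer f I := fun x r hr => by
    rw [← ι.map_smul, ← hX, RingHom.mem_ker.mp hr, zero_smul, map_zero]
  let ιT : X →ₗ[S] Submodule.torsionByKer f I :=
    .extendScalarsOfSurjectiveHom Fact.out hX Submodule.torsionByKer.smul_eq (ι.codRestrict _ hιT)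
  have : Module.Injective R (I ⧸ LinearMap.range ι) := hQ
  have : Module.Injective R I := hI
  refine ⟨.of S (Submodule.torsionByKer f I), ιT, inferInstance,
    fun a b hab => hι (congrArg Subtype.val hab), ?_⟩
  refine Module.Injective.of_ringEquiv (RingEquiv.refl S)
    (Submodule.torsionByKerQuotientEquiv hK (N := LinearMap.range ι) ?_ _ fun y => ?_).symm
  · rintro _ ⟨x, rfl⟩
    exact hιT x
  · exact ⟨fun ⟨x, hx⟩ => ⟨x, congrArg Subtype.val hx⟩,
      fun ⟨x, hx⟩ => ⟨x, Subtype.ext hx⟩⟩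

theorem RingHom.ker_op_le_mul_self {A B : Type*} [Ring A] [Ring B] (π : A →+* B) {e : A}
    (he : e * e = e) (hker : ∀ x : A,
      π x = 0 ↔ x ∈ AddSubgroup.closure {y : A | ∃ a b : A, y = a * e * b}) :
    ker π.op ≤ ker π.op * ker π.op := by
  have hmem : ∀ a b : A, MulOpposite.op (a * e * b) ∈ ker π.op := fun a b => by
    rw [mem_ker, op_apply_apply, unop_op, MulOpposite.op_eq_zero_iff, hker]
    exact AddSubgroup.subset_closure ⟨a, b, rfl⟩
  intro r hr
  obtain ⟨x, rfl⟩ := MulOpposite.op_surjective r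
  rw [mem_ker, op_apply_apply, unop_op, MulOpposite.op_eq_zero_iff, hker] at hr
  induction hr using AddSubgroup.closure_induction with
  | mem y hy =>
    obtain ⟨a, b, rfl⟩ := hy
    have hfactor : a * e * b = a * e * 1 * (1 * e * b) := by
      rw [mul_one, one_mul, ← mul_assoc, mul_assoc a e e, he]
    rw [hfactor, MulOpposite.op_mul]
    exact Ideal.mul_mem_mul (hmem 1 b) (hmem a 1)
  | zero => exact zero_mem _
  | add y z _ _ hy hz => exact add_mem hy hz
  | neg y _ hy => exact neg_mem hy

theorem stmt5_general (A B : Type) [Ring A] [Ring B] (π : A →+* B) (hπ : Function.Surjective π)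
    (e : A) (he : e * e = e)
    (hker : ∀ x : A, π x = 0 ↔ x ∈ AddSubgroup.closure {y : A | ∃ a b : A, y = a * e * b})
    (M : Type) [AddCommGroup M] [Module Aᵐᵒᵖ M]
    -- `M` is annihilated by the two-sided ideal `AeA`
    (hann : ∀ (m : M) (x : A),
      x ∈ AddSubgroup.closure {y : A | ∃ a b : A, y = a * e * b} → (op x) • m = 0)
    -- `id_A M ≤ 1`
    (hid : idLE Aᵐᵒᵖ 1 M) :
    ∃ (N : ModuleCat Bᵐᵒᵖ) (φ : M ≃+ N),
      (∀ (a : A) (m : M), φ ((op a) • m) = (op (π a)) • φ m) ∧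
      idLE Bᵐᵒᵖ 1 N := by
  have hπop : Surjective π.op := fun b => by
    obtain ⟨a, ha⟩ := hπ b.unop
    exact ⟨op a, by rw [RingHom.op_apply_apply, unop_op, ha, op_unop]⟩
  have : Fact (Surjective π.op) := ⟨hπop⟩
  have hM : Module.IsTorsionBySet Aᵐᵒᵖ M (RingHom.ker π.op) := fun m r =>
    hann m r.1.unop <| (hker _).mp <| by
      simpa only [SetLike.mem_coe, RingHom.mem_ker, RingHom.op_apply_apply, op_eq_zero_iff]
        using r.2
  let _ := hM.moduleOfSurjective hπop
  have hcompat : ∀ (r : Aᵐᵒᵖ) (m : M), π.op r • m = r • m := hM.smul_moduleOfSurjective hπop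
  refine ⟨.of Bᵐᵒᵖ M, .refl M, fun a m => (hcompat (op a) m).symm, ?_⟩
  exact idLE_one_of_surjective (π.ker_op_le_mul_self he hker) M hcompat hid

/-- Let `A` be a finite-dimensional `k`-algebra, `e` an idempotent and
`B = A/AeA` (encoded as a surjective ring homomorphism `π : A → B` whose kernel is the
two-sided ideal generated by `e`).  If `M` is an indecomposable finitely generated right
`A`-module annihilated by `AeA` with `id_A M ≤ 1`, then `M`, viewed as a right `B`-module,
has injective dimension at most `1` over `B`. -/
theorem stmt5 (k A B : Type) [Field k] [Ring A] [Algebra k A] [FiniteDimensional k A]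
    [Ring B] (π : A →+* B) (hπ : Function.Surjective π)
    (e : A) (he : e * e = e)
    (hker : ∀ x : A, π x = 0 ↔ x ∈ AddSubgroup.closure {y : A | ∃ a b : A, y = a * e * b})
    (M : Type) [AddCommGroup M] [Module Aᵐᵒᵖ M] [Module.Finite Aᵐᵒᵖ M]
    -- `M` is indecomposable
    (hnt : Nontrivial M)
    (hindec : ∀ f : M →ₗ[Aᵐᵒᵖ] M, f ∘ₗ f = f → f = 0 ∨ f = LinearMap.id)
    -- `M` is annihilated by the two-sided ideal `AeA`
    (hann : ∀ (m : M) (x : A),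
      x ∈ AddSubgroup.closure {y : A | ∃ a b : A, y = a * e * b} → (op x) • m = 0)
    -- `id_A M ≤ 1`
    (hid : idLE Aᵐᵒᵖ 1 M) :
    ∃ (N : ModuleCat Bᵐᵒᵖ) (φ : M ≃+ N),
      (∀ (a : A) (m : M), φ ((op a) • m) = (op (π a)) • φ m) ∧
      idLE Bᵐᵒᵖ 1 N :=
  stmt5_general A B π hπ e he hker M hann hid
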